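/- Let H be a finite-dimensional complex inner product space. The map sending a commutative unital star-subalgebra C of H →L[ℂ] H to the set Proj(C) = { LinearMap.range p | p ∈ C, star p = p and p * p = p } of ranges of its self-adjoint idempotents is a bijection from the set of commutative unital star-subalgebras of H →L[ℂ] H onto the set of Boolean subalgebras of the subspace lattice of H, i.e. sets L of subspaces containing ⊥ and ⊤, closed under ⊓, ⊔ and orthogonal complement ᗮ, and distributive (∀ K, M, N ∈ L, K ⊓ (M ⊔ N) = (K ⊓ M) ⊔ (K ⊓ N)); its inverse sends L to the linear span of the orthogonal projections { P_K | K ∈ L } inside H →L[ℂ] H. -/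

import Mathlib

/-- The orthogonal projection of `H` onto `K`, as a continuous endomorphism `P_K` of `H`. -/
noncomputable def projCLM {H : Type*} [NormedAddCommGroup H] [InnerProductSpace ℂ H]
    [FiniteDimensional ℂ H] (K : Submodule ℂ H) : H →L[ℂ] H :=
  K.subtypeL.comp K.orthogonalProjectionOnto

/-!
Star projections in a commutative star algebra commute, and for commuting projections
`P_{K ⊓ M} = P_K P_M`, `P_{K ⊔ M} = P_K + P_M - P_K P_M` and `P_{Kᗮ} = 1 - P_K`, so their ranges
form a Boolean algebra. Conversely, in a Boolean subalgebra `L` distributivity gives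
`M = (M ⊓ K) ⊔ (M ⊓ Kᗮ)`, hence `P_K P_M = P_{K ⊓ M}`: the span of `{P_K | K ∈ L}` is a
commutative star algebra. Each of its elements is `∑ cᵢ P_{Aᵢ}` for an orthogonal partition of
unity `(Aᵢ)` drawn from `L`; it is idempotent only if `cᵢ ∈ {0, 1}` whenever `Aᵢ ≠ ⊥`, so its
range is a finite join of members of `L`.

Both maps are inverse to each other because every star subalgebra `C` is spanned by its
projections: in finite dimension `C` is closed and spectra are finite, so a self-adjoint `a ∈ C`
is `∑ μ • cfc 1_{μ} a`, a combination of spectral projections lying in `C`.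
-/

theorem IsStarNormal.mem_span_isStarProjection {A : Type*} [CStarAlgebra A]
    {S : StarSubalgebra ℂ A} [IsClosed (S : Set A)] {a : A} (ha : a ∈ S) [IsStarNormal a]
    (hfin : (spectrum ℂ a).Finite) :
    a ∈ Submodule.span ℂ {p | p ∈ S ∧ IsStarProjection p} := by
  set e : ℂ → ℂ → ℂ := fun μ z => if z = μ then 1 else 0
  have he : ∀ μ, IsStarProjection (cfc (e μ) a) := fun μ => by
    refine ⟨?_, ?_⟩
    · rw [IsIdempotentElem, ← cfc_mul _ _ a (hfin.continuousOn _) (hfin.continuousOn _)]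
      congr! 2 with z
      simp only [e]; split_ifs <;> simp
    · rw [IsSelfAdjoint, ← cfc_star]
      congr! 2 with z
      simp only [e]; split_ifs <;> simp
  have hsum : a = ∑ μ ∈ hfin.toFinset, μ • cfc (e μ) a := calc
    a = cfc (∑ μ ∈ hfin.toFinset, fun z => μ * e μ z) a := by
      conv_lhs => rw [← cfc_id ℂ a]
      refine cfc_congr fun z hz => ?_
      simp [e, Finset.sum_apply, hz]
    _ = _ := by
      rw [cfc_sum _ _ _ fun μ _ => hfin.continuousOn _]
      exact Finset.sum_congr rfl fun μ _ => cfc_const_mul _ _ _ (hfin.continuousOn _)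
  rw [hsum]
  exact Submodule.sum_mem _ fun μ _ => Submodule.smul_mem _ _ <|
    Submodule.subset_span ⟨cfc_mem _ ha, he μ⟩

open ComplexStarModule in
theorem StarSubalgebra.mem_span_isStarProjection {A : Type*} [CStarAlgebra A]
    {S : StarSubalgebra ℂ A} [IsClosed (S : Set A)] (hfin : ∀ a : A, (spectrum ℂ a).Finite)
    {a : A} (ha : a ∈ S) : a ∈ Submodule.span ℂ {p | p ∈ S ∧ IsStarProjection p} := by
  have hre : (ℜ a : A) ∈ S := by
    rw [realPart_apply_coe, RCLike.real_smul_eq_coe_smul (K := ℂ)]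
    exact S.smul_mem (add_mem ha (star_mem ha)) _
  have him : (ℑ a : A) ∈ S := by
    rw [imaginaryPart_apply_coe, RCLike.real_smul_eq_coe_smul (K := ℂ)]
    exact S.smul_mem (S.smul_mem (sub_mem ha (star_mem ha)) _) _
  rw [← realPart_add_I_smul_imaginaryPart a]
  exact add_mem (IsStarNormal.mem_span_isStarProjection hre (hfin _))
    (Submodule.smul_mem _ _ (IsStarNormal.mem_span_isStarProjection him (hfin _)))

section projCLM

variable {H : Type*} [NormedAddCommGroup H] [InnerProductSpace ℂ H] [FiniteDimensional ℂ H]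
  {K M N : Submodule ℂ H}

lemma isStarProjection_projCLM (K : Submodule ℂ H) : IsStarProjection (projCLM K) :=
  isStarProjection_starProjection

lemma range_projCLM (K : Submodule ℂ H) : LinearMap.range (projCLM K : H →ₗ[ℂ] H) = K :=
  K.range_starProjection

lemma projCLM_injective : Function.Injective (projCLM : Submodule ℂ H → H →L[ℂ] H) :=
  fun K M h => by rw [← range_projCLM K, h, range_projCLM]

lemma IsStarProjection.eq_projCLM_range {p : H →L[ℂ] H} (hp : IsStarProjection p) :
    p = projCLM (LinearMap.range (p : H →ₗ[ℂ] H)) :=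
  ContinuousLinearMap.IsStarProjection.ext hp (isStarProjection_projCLM _) (range_projCLM _).symm

lemma projCLM_bot : projCLM (⊥ : Submodule ℂ H) = 0 := Submodule.starProjection_bot

lemma projCLM_top : projCLM (⊤ : Submodule ℂ H) = 1 := Submodule.starProjection_top'

lemma projCLM_orthogonal (K : Submodule ℂ H) : projCLM Kᗮ = 1 - projCLM K :=
  K.starProjection_orthogonal'

lemma projCLM_mul_projCLM_of_le (h : M ≤ K) : projCLM K * projCLM M = projCLM M := by
  ext x
  exact K.starProjection_eq_self_iff.mpr (h (M.starProjection_apply_mem x))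

lemma projCLM_mul_projCLM_of_isOrtho (h : K ⟂ M) : projCLM K * projCLM M = 0 :=
  h.starProjection_comp_starProjection

lemma projCLM_inf_of_commute (h : Commute (projCLM K) (projCLM M)) :
    projCLM (K ⊓ M) = projCLM K * projCLM M := by
  ext x
  refine Submodule.eq_starProjection_of_mem_orthogonal
    ⟨K.starProjection_apply_mem _, h.eq ▸ M.starProjection_apply_mem _⟩ ?_
  have hsplit : x - (projCLM K * projCLM M) x =
      (x - projCLM K x) + (projCLM K x - projCLM M (projCLM K x)) := by
    rw [h.eq]; simp only [mul_apply_eq_comp]; abel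
  rw [hsplit]
  exact add_mem (Submodule.orthogonal_le inf_le_left (K.sub_starProjection_mem_orthogonal x))
    (Submodule.orthogonal_le inf_le_right (M.sub_starProjection_mem_orthogonal _))

lemma projCLM_sup_of_commute (h : Commute (projCLM K) (projCLM M)) :
    projCLM (K ⊔ M) = projCLM K + projCLM M - projCLM K * projCLM M := by
  have h' : Commute (projCLM Kᗮ) (projCLM Mᗮ) := by
    simp only [projCLM_orthogonal]
    exact (Commute.one_left _).sub_left ((Commute.one_right _).sub_right h)
  rw [← Submodule.orthogonal_orthogonal (K ⊔ M), projCLM_orthogonal, ← Submodule.inf_orthogonal,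
    projCLM_inf_of_commute h', projCLM_orthogonal, projCLM_orthogonal]
  noncomm_ring

lemma projCLM_sup_of_isOrtho (h : K ⟂ M) : projCLM (K ⊔ M) = projCLM K + projCLM M := by
  have hKM := projCLM_mul_projCLM_of_isOrtho h
  rw [projCLM_sup_of_commute (hKM.trans (projCLM_mul_projCLM_of_isOrtho h.symm).symm), hKM,
    sub_zero]

lemma projCLM_finset_sup {ι : Type*} {s : Finset ι} {A : ι → Submodule ℂ H}
    (h : (s : Set ι).Pairwise fun i j => A i ⟂ A j) :
    projCLM (s.sup A) = ∑ i ∈ s, projCLM (A i) := by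
  classical
  induction s using Finset.induction_on with
  | empty => simp [projCLM_bot]
  | insert a s ha ih =>
    rw [Finset.coe_insert, Set.pairwise_insert] at h
    have hortho : A a ⟂ s.sup A := Submodule.isOrtho_comm.mp <| Submodule.isOrtho_iff_le.mpr <|
      Finset.sup_le fun i hi => Submodule.isOrtho_iff_le.mp
        ((h.2 i hi (ne_of_mem_of_not_mem hi ha).symm).2)
    rw [Finset.sup_insert, Finset.sum_insert ha, projCLM_sup_of_isOrtho hortho, ih h.1]

lemma inf_sup_distrib_of_commute (hKM : Commute (projCLM K) (projCLM M))
    (hKN : Commute (projCLM K) (projCLM N)) (hMN : Commute (projCLM M) (projCLM N)) :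
    K ⊓ (M ⊔ N) = K ⊓ M ⊔ K ⊓ N := by
  refine projCLM_injective ?_
  have hK_MN : Commute (projCLM K) (projCLM (M ⊔ N)) := by
    rw [projCLM_sup_of_commute hMN]
    exact (hKM.add_right hKN).sub_right (hKM.mul_right hKN)
  have hKM_KN : Commute (projCLM (K ⊓ M)) (projCLM (K ⊓ N)) := by
    rw [projCLM_inf_of_commute hKM, projCLM_inf_of_commute hKN]
    exact ((Commute.refl _).mul_right hKN).mul_left (hKM.symm.mul_right hMN)
  rw [projCLM_inf_of_commute hK_MN, projCLM_sup_of_commute hMN, projCLM_sup_of_commute hKM_KN,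
    projCLM_inf_of_commute hKM, projCLM_inf_of_commute hKN, mul_sub, mul_add]
  congr 1
  calc projCLM K * (projCLM M * projCLM N)
      = projCLM K * projCLM K * projCLM M * projCLM N := by
        rw [(isStarProjection_projCLM K).isIdempotentElem.eq, mul_assoc]
    _ = projCLM K * (projCLM K * projCLM M) * projCLM N := by noncomm_ring
    _ = projCLM K * (projCLM M * projCLM K) * projCLM N := by rw [hKM.eq]
    _ = projCLM K * projCLM M * (projCLM K * projCLM N) := by noncomm_ring

end projCLM

section projRanges

variable {H : Type*} [NormedAddCommGroup H] [InnerProductSpace ℂ H] [FiniteDimensional ℂ H]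
  {C : StarSubalgebra ℂ (H →L[ℂ] H)} {K : Submodule ℂ H}

def projRanges (C : StarSubalgebra ℂ (H →L[ℂ] H)) : Set (Submodule ℂ H) :=
  {K | ∃ p ∈ C, star p = p ∧ p * p = p ∧ LinearMap.range (p : H →ₗ[ℂ] H) = K}

def projSpan (L : Set (Submodule ℂ H)) : Submodule ℂ (H →L[ℂ] H) :=
  Submodule.span ℂ {T | ∃ K ∈ L, T = projCLM K}

lemma mem_projRanges_iff : K ∈ projRanges C ↔ projCLM K ∈ C := by
  refine ⟨?_, fun hK => ⟨projCLM K, hK, (isStarProjection_projCLM K).isSelfAdjoint,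
    (isStarProjection_projCLM K).isIdempotentElem, range_projCLM K⟩⟩
  rintro ⟨p, hp, hstar, hidem, rfl⟩
  rwa [← IsStarProjection.eq_projCLM_range ⟨hidem, hstar⟩]

lemma coe_eq_projSpan_projRanges (C : StarSubalgebra ℂ (H →L[ℂ] H)) :
    (C : Set (H →L[ℂ] H)) = projSpan (projRanges C) := by
  refine subset_antisymm (fun T hT => ?_) ?_
  · have : IsClosed (C : Set (H →L[ℂ] H)) :=
      Submodule.closed_of_finiteDimensional (Subalgebra.toSubmodule C.toSubalgebra)
    refine Submodule.span_mono ?_ (C.mem_span_isStarProjection (fun a => ?_) hT)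
    · rintro p ⟨hp, hproj⟩
      exact ⟨_, mem_projRanges_iff.mpr (hproj.eq_projCLM_range ▸ hp), hproj.eq_projCLM_range⟩
    · rw [ContinuousLinearMap.spectrum_eq]
      exact Module.End.finite_spectrum _
  · refine fun T hT => (Submodule.span_le (p := Subalgebra.toSubmodule C.toSubalgebra)).mpr ?_ hT
    rintro _ ⟨K, hK, rfl⟩
    exact mem_projRanges_iff.mp hK

end projRanges

section IsBooleanSubalgebra

variable {𝕜 E : Type*} [RCLike 𝕜] [NormedAddCommGroup E] [InnerProductSpace 𝕜 E]
  {L : Set (Submodule 𝕜 E)}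

structure IsBooleanSubalgebra (L : Set (Submodule 𝕜 E)) : Prop where
  bot_mem : ⊥ ∈ L
  top_mem : ⊤ ∈ L
  inf_mem : ∀ K ∈ L, ∀ M ∈ L, K ⊓ M ∈ L
  sup_mem : ∀ K ∈ L, ∀ M ∈ L, K ⊔ M ∈ L
  orthogonal_mem : ∀ K ∈ L, Kᗮ ∈ L
  inf_sup_distrib : ∀ K ∈ L, ∀ M ∈ L, ∀ N ∈ L, K ⊓ (M ⊔ N) = K ⊓ M ⊔ K ⊓ N

lemma isBooleanSubalgebra_iff : IsBooleanSubalgebra L ↔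
    ⊥ ∈ L ∧ ⊤ ∈ L ∧ (∀ K ∈ L, ∀ M ∈ L, K ⊓ M ∈ L) ∧ (∀ K ∈ L, ∀ M ∈ L, K ⊔ M ∈ L) ∧
      (∀ K ∈ L, Kᗮ ∈ L) ∧ (∀ K ∈ L, ∀ M ∈ L, ∀ N ∈ L, K ⊓ (M ⊔ N) = K ⊓ M ⊔ K ⊓ N) :=
  ⟨fun ⟨h₁, h₂, h₃, h₄, h₅, h₆⟩ => ⟨h₁, h₂, h₃, h₄, h₅, h₆⟩,
    fun ⟨h₁, h₂, h₃, h₄, h₅, h₆⟩ => ⟨h₁, h₂, h₃, h₄, h₅, h₆⟩⟩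

end IsBooleanSubalgebra

section Boolean

variable {H : Type*} [NormedAddCommGroup H] [InnerProductSpace ℂ H] [FiniteDimensional ℂ H]
  {L : Set (Submodule ℂ H)} {K M : Submodule ℂ H}

theorem isBooleanSubalgebra_projRanges {C : StarSubalgebra ℂ (H →L[ℂ] H)}
    (hC : ∀ a ∈ C, ∀ b ∈ C, a * b = b * a) : IsBooleanSubalgebra (projRanges C) := by
  have hcomm {K M : Submodule ℂ H} (hK : K ∈ projRanges C) (hM : M ∈ projRanges C) :
      Commute (projCLM K) (projCLM M) :=
    hC _ (mem_projRanges_iff.mp hK) _ (mem_projRanges_iff.mp hM)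
  refine ⟨?_, ?_, fun K hK M hM => ?_, fun K hK M hM => ?_, fun K hK => ?_,
    fun K hK M hM N hN => inf_sup_distrib_of_commute (hcomm hK hM) (hcomm hK hN) (hcomm hM hN)⟩
  all_goals simp only [mem_projRanges_iff] at *
  · simp [projCLM_bot]
  · simp [projCLM_top]
  · rw [projCLM_inf_of_commute (hcomm hK hM)]
    exact mul_mem hK hM
  · rw [projCLM_sup_of_commute (hcomm hK hM)]
    exact sub_mem (add_mem hK hM) (mul_mem hK hM)
  · rw [projCLM_orthogonal]
    exact sub_mem (one_mem C) hK

namespace IsBooleanSubalgebra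

variable (hL : IsBooleanSubalgebra L)
include hL

lemma projCLM_mul_projCLM (hK : K ∈ L) (hM : M ∈ L) :
    projCLM K * projCLM M = projCLM (K ⊓ M) := by
  have hdecomp : M ⊓ K ⊔ M ⊓ Kᗮ = M := by
    rw [← hL.inf_sup_distrib M hM K hK Kᗮ (hL.orthogonal_mem K hK),
      Submodule.sup_orthogonal_of_hasOrthogonalProjection, inf_top_eq]
  have hperp : K ⟂ M ⊓ Kᗮ := (Submodule.isOrtho_orthogonal_right K).mono_right inf_le_right
  calc projCLM K * projCLM M = projCLM K * (projCLM (M ⊓ K) + projCLM (M ⊓ Kᗮ)) := by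
        rw [← projCLM_sup_of_isOrtho (hperp.mono_left inf_le_right), hdecomp]
    _ = projCLM (K ⊓ M) := by
        rw [mul_add, projCLM_mul_projCLM_of_le inf_le_right,
          projCLM_mul_projCLM_of_isOrtho hperp, add_zero, inf_comm]

lemma commute_projCLM (hK : K ∈ L) (hM : M ∈ L) : Commute (projCLM K) (projCLM M) := by
  rw [Commute, SemiconjBy, hL.projCLM_mul_projCLM hK hM, hL.projCLM_mul_projCLM hM hK, inf_comm]

lemma mul_mem_projSpan {x y : H →L[ℂ] H} (hx : x ∈ projSpan L) (hy : y ∈ projSpan L) :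
    x * y ∈ projSpan L := by
  refine (?_ : projSpan L * projSpan L ≤ projSpan L) (Submodule.mul_mem_mul hx hy)
  rw [projSpan, Submodule.span_mul_span, Submodule.span_le]
  rintro _ ⟨_, ⟨K, hK, rfl⟩, _, ⟨M, hM, rfl⟩, rfl⟩
  exact Submodule.subset_span ⟨K ⊓ M, hL.inf_mem K hK M hM, hL.projCLM_mul_projCLM hK hM⟩

lemma commute_of_mem_projSpan {x y : H →L[ℂ] H} (hx : x ∈ projSpan L) (hy : y ∈ projSpan L) :
    Commute x y := by
  induction hx, hy using Submodule.span_induction₂ with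
  | mem_mem _ _ hx hy =>
    obtain ⟨K, hK, rfl⟩ := hx
    obtain ⟨M, hM, rfl⟩ := hy
    exact hL.commute_projCLM hK hM
  | zero_left => exact Commute.zero_left _
  | zero_right => exact Commute.zero_right _
  | add_left _ _ _ _ _ _ h₁ h₂ => exact h₁.add_left h₂
  | add_right _ _ _ _ _ _ h₁ h₂ => exact h₁.add_right h₂
  | smul_left _ _ _ _ _ h => exact h.smul_left _
  | smul_right _ _ _ _ _ h => exact h.smul_right _

end IsBooleanSubalgebra

lemma star_mem_projSpan {x : H →L[ℂ] H} (hx : x ∈ projSpan L) : star x ∈ projSpan L := by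
  induction hx using Submodule.span_induction with
  | mem _ h =>
    obtain ⟨K, hK, rfl⟩ := h
    rw [(isStarProjection_projCLM K).isSelfAdjoint.star_eq]
    exact Submodule.subset_span ⟨K, hK, rfl⟩
  | zero => simp
  | add _ _ _ _ h₁ h₂ => simpa using add_mem h₁ h₂
  | smul _ _ _ h => simpa using Submodule.smul_mem _ _ h

end Boolean

section Partition

variable {H : Type*} [NormedAddCommGroup H] [InnerProductSpace ℂ H] [FiniteDimensional ℂ H]
  {L : Set (Submodule ℂ H)} {K : Submodule ℂ H}
  {ι κ : Type*} [Fintype ι] [Fintype κ] {A : ι → Submodule ℂ H} {B : κ → Submodule ℂ H}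

structure IsOrthogonalPartition (L : Set (Submodule ℂ H)) (A : ι → Submodule ℂ H) : Prop where
  mem : ∀ i, A i ∈ L
  pairwise_isOrtho : Pairwise fun i j => A i ⟂ A j
  sum_projCLM : ∑ i, projCLM (A i) = 1

lemma IsBooleanSubalgebra.isOrthogonalPartition_cond (hL : IsBooleanSubalgebra L) (hK : K ∈ L) :
    IsOrthogonalPartition L fun b : Bool => cond b K Kᗮ where
  mem b := by
    cases b
    · exact hL.orthogonal_mem K hK
    · exact hK
  pairwise_isOrtho b b' hb := by
    cases b <;> cases b'
    all_goals first
      | exact absurd rfl hb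
      | exact Submodule.isOrtho_orthogonal_left K
      | exact Submodule.isOrtho_orthogonal_right K
  sum_projCLM := by simp [projCLM_orthogonal]

namespace IsOrthogonalPartition

variable (hL : IsBooleanSubalgebra L)
include hL

lemma projCLM_eq_sum_inf (hA : IsOrthogonalPartition L A) (hK : K ∈ L) :
    projCLM K = ∑ i, projCLM (K ⊓ A i) := by
  rw [← mul_one (projCLM K), ← hA.sum_projCLM, Finset.mul_sum]
  exact Finset.sum_congr rfl fun i _ => hL.projCLM_mul_projCLM hK (hA.mem i)

lemma inf (hA : IsOrthogonalPartition L A) (hB : IsOrthogonalPartition L B) :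
    IsOrthogonalPartition L fun p : ι × κ => A p.1 ⊓ B p.2 where
  mem p := hL.inf_mem _ (hA.mem p.1) _ (hB.mem p.2)
  pairwise_isOrtho := by
    rintro ⟨i, j⟩ ⟨i', j'⟩ hne
    by_cases hi : i = i'
    · subst hi
      exact (hB.pairwise_isOrtho fun hj => hne (Prod.ext rfl hj)).mono inf_le_right inf_le_right
    · exact (hA.pairwise_isOrtho hi).mono inf_le_left inf_le_left
  sum_projCLM := by
    rw [Fintype.sum_prod_type, ← hA.sum_projCLM]
    exact Finset.sum_congr rfl fun i _ => (hB.projCLM_eq_sum_inf hL (hA.mem i)).symm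

lemma sum_smul_projCLM_eq_sum_inf (hB : IsOrthogonalPartition L B) (hA : ∀ i, A i ∈ L)
    (c : ι → ℂ) : ∑ i, c i • projCLM (A i) = ∑ i, ∑ j, c i • projCLM (A i ⊓ B j) := by
  simp_rw [hB.projCLM_eq_sum_inf hL (hA _), Finset.smul_sum]

lemma range_mem (hA : IsOrthogonalPartition L A) (c : ι → ℂ)
    (hidem : IsIdempotentElem (∑ i, c i • projCLM (A i))) :
    LinearMap.range ((∑ i, c i • projCLM (A i) : H →L[ℂ] H) : H →ₗ[ℂ] H) ∈ L := by
  classical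
  set x := ∑ i, c i • projCLM (A i) with hx
  have hxP (j : ι) : x * projCLM (A j) = c j • projCLM (A j) := by
    rw [hx, Finset.sum_mul, Finset.sum_eq_single j]
    · rw [smul_mul_assoc, (isStarProjection_projCLM _).isIdempotentElem.eq]
    · intro i _ hij
      rw [smul_mul_assoc, projCLM_mul_projCLM_of_isOrtho (hA.pairwise_isOrtho hij), smul_zero]
    · simp
  -- Multiplying `x * x = x` by `P_{A j}` gives `c j ^ 2 = c j` unless `A j = ⊥`.
  have hc (j : ι) : c j • projCLM (A j) = if c j = 1 then projCLM (A j) else 0 := by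
    by_cases hP : projCLM (A j) = 0
    · simp [hP]
    have h := congrArg (· * projCLM (A j)) hidem.eq
    simp only [mul_assoc, hxP, mul_smul_comm, smul_smul] at h
    rcases IsIdempotentElem.iff_eq_zero_or_one.mp (smul_left_injective ℂ hP h) with h0 | h1
    · simp [h0]
    · simp [h1]
  have hsum : x = ∑ j ∈ Finset.univ.filter (c · = 1), projCLM (A j) := by
    rw [Finset.sum_filter]
    exact Finset.sum_congr rfl fun j _ => hc j
  rw [hsum, ← projCLM_finset_sup fun i _ j _ hij => hA.pairwise_isOrtho hij, range_projCLM]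
  exact Finset.sup_mem L hL.bot_mem hL.sup_mem _ _ fun i _ => hA.mem i

end IsOrthogonalPartition

namespace IsBooleanSubalgebra

variable (hL : IsBooleanSubalgebra L)
include hL

lemma exists_isOrthogonalPartition_of_mem_projSpan {x : H →L[ℂ] H} (hx : x ∈ projSpan L) :
    ∃ (ι : Type) (_ : Fintype ι) (A : ι → Submodule ℂ H) (c : ι → ℂ),
      IsOrthogonalPartition L A ∧ x = ∑ i, c i • projCLM (A i) := by
  induction hx using Submodule.span_induction with
  | mem _ h =>
    obtain ⟨K, hK, rfl⟩ := h
    exact ⟨Bool, _, _, fun b => cond b 1 0, hL.isOrthogonalPartition_cond hK, by simp⟩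
  | zero => exact ⟨Bool, _, _, 0, hL.isOrthogonalPartition_cond hL.top_mem, by simp⟩
  | add _ _ _ _ hx hy =>
    obtain ⟨ι, _, A, c, hA, rfl⟩ := hx
    obtain ⟨κ, _, B, d, hB, rfl⟩ := hy
    refine ⟨ι × κ, inferInstance, _, fun p => c p.1 + d p.2, hA.inf hL hB, ?_⟩
    rw [hB.sum_smul_projCLM_eq_sum_inf hL hA.mem, hA.sum_smul_projCLM_eq_sum_inf hL hB.mem,
      Finset.sum_comm (γ := κ), Fintype.sum_prod_type, ← Finset.sum_add_distrib]
    simp_rw [inf_comm (B _), add_smul, Finset.sum_add_distrib]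
  | smul a _ _ hx =>
    obtain ⟨ι, _, A, c, hA, rfl⟩ := hx
    exact ⟨ι, _, A, a • c, hA, by simp [Finset.smul_sum, smul_smul]⟩

lemma range_mem_of_mem_projSpan {p : H →L[ℂ] H} (hp : p ∈ projSpan L)
    (hidem : IsIdempotentElem p) :
    LinearMap.range (p : H →ₗ[ℂ] H) ∈ L := by
  obtain ⟨ι, _, A, c, hA, rfl⟩ := hL.exists_isOrthogonalPartition_of_mem_projSpan hp
  exact hA.range_mem hL c hidem

def projStarSubalgebra : StarSubalgebra ℂ (H →L[ℂ] H) where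
  toSubalgebra := (projSpan L).toSubalgebra
    (Submodule.subset_span ⟨⊤, hL.top_mem, projCLM_top.symm⟩) fun _ _ => hL.mul_mem_projSpan
  star_mem' := star_mem_projSpan

lemma projRanges_projStarSubalgebra : projRanges hL.projStarSubalgebra = L := by
  ext K
  refine ⟨?_, fun hK => mem_projRanges_iff.mpr (Submodule.subset_span ⟨K, hK, rfl⟩)⟩
  rintro ⟨p, hp, -, hidem, rfl⟩
  exact hL.range_mem_of_mem_projSpan hp hidem

end IsBooleanSubalgebra

end Partition

/-- Sending a commutative unital star-subalgebra `C` of `H →L[ℂ] H` to the set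
`Proj(C)` of ranges of its self-adjoint idempotents is a bijection onto the Boolean
subalgebras of the subspace lattice of `H`; its inverse sends a Boolean subalgebra `L`
to the linear span of the orthogonal projections `{ P_K | K ∈ L }`. -/
theorem commutative_starSubalgebra_proj_bijOn_boolean
    {H : Type*} [NormedAddCommGroup H] [InnerProductSpace ℂ H] [FiniteDimensional ℂ H] :
    Set.BijOn
      (fun C : StarSubalgebra ℂ (H →L[ℂ] H) =>
        {K : Submodule ℂ H | ∃ p ∈ C, star p = p ∧ p * p = p ∧ LinearMap.range (p : H →ₗ[ℂ] H) = K})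
      {C : StarSubalgebra ℂ (H →L[ℂ] H) | ∀ a ∈ C, ∀ b ∈ C, a * b = b * a}
      {L : Set (Submodule ℂ H) | ⊥ ∈ L ∧ ⊤ ∈ L ∧ (∀ K ∈ L, ∀ M ∈ L, K ⊓ M ∈ L) ∧
        (∀ K ∈ L, ∀ M ∈ L, K ⊔ M ∈ L) ∧ (∀ K ∈ L, Kᗮ ∈ L) ∧
        (∀ K ∈ L, ∀ M ∈ L, ∀ N ∈ L, K ⊓ (M ⊔ N) = (K ⊓ M) ⊔ (K ⊓ N))} ∧
    ∀ C : StarSubalgebra ℂ (H →L[ℂ] H), (∀ a ∈ C, ∀ b ∈ C, a * b = b * a) →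
      (C : Set (H →L[ℂ] H)) =
        ↑(Submodule.span ℂ
          {T : H →L[ℂ] H |
            ∃ K ∈ {K : Submodule ℂ H |
                ∃ p ∈ C, star p = p ∧ p * p = p ∧ LinearMap.range (p : H →ₗ[ℂ] H) = K},
              T = projCLM K}) := by
  simp_rw [← isBooleanSubalgebra_iff]
  refine ⟨⟨fun C hC => isBooleanSubalgebra_projRanges hC, fun C₁ _ C₂ _ h => ?_, fun L hL => ?_⟩,
    fun C _ => coe_eq_projSpan_projRanges C⟩
  · change projRanges C₁ = projRanges C₂ at h
    exact SetLike.coe_injective <| by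
      rw [coe_eq_projSpan_projRanges C₁, coe_eq_projSpan_projRanges C₂, h]
  · exact ⟨hL.projStarSubalgebra, fun a ha b hb => hL.commute_of_mem_projSpan ha hb,
      hL.projRanges_projStarSubalgebra⟩
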